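/- Let A⁽¹⁾, …, A⁽ᵍ⁾ be measurements on ℂ^d all of whose effects are nonzero, let ρ ∈ Matrix (Fin d) (Fin d) ℂ be positive definite with trace 1, and let B be a joint measurement with m outcomes, i.e., A⁽ⁱ⁾ ⪯ B for every i. Then (m : ℝ) ≥ 𝔥(F_ρ(A⁽¹⁾), …, F_ρ(A⁽ᵍ⁾)), where 𝔥 is the height of the family of d² × d² matrices F_ρ(A⁽ⁱ⁾). -/

import Mathlib

open Matrix
open scoped Kronecker ComplexOrder

noncomputable section

/-- A measurement (POVM): a finite family of positive semidefinite matrices summing to `1`. -/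
def IsMeasurement {ι κ : Type*} [Fintype ι] [DecidableEq ι] [Fintype κ]
    (A : κ → Matrix ι ι ℂ) : Prop :=
  (∀ x, (A x).PosSemidef) ∧ ∑ x, A x = 1

/-- `A` is a post-processing of `B`: `A ⪯ B`. -/
def PostProc {ι : Type*} {n m : ℕ}
    (A : Fin n → Matrix ι ι ℂ) (B : Fin m → Matrix ι ι ℂ) : Prop :=
  ∃ μ : Fin n → Fin m → ℝ,
    (∀ x y, 0 ≤ μ x y) ∧ (∀ y, ∑ x, μ x y = 1) ∧
    (∀ x, A x = ∑ y, (μ x y : ℂ) • B y)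

/-- The outer product `|E⟩⟨F|` of the vectorizations of two matrices. -/
def outerProd {ι : Type*} (E F : Matrix ι ι ℂ) : Matrix (ι × ι) (ι × ι) ℂ :=
  Matrix.of fun p q => E p.1 p.2 * star (F q.1 q.2)

/-- The (un-normalized) Fisher information map of a measurement. -/
noncomputable def Fisher {ι κ : Type*} [Fintype ι] [Fintype κ]
    (A : κ → Matrix ι ι ℂ) : Matrix (ι × ι) (ι × ι) ℂ :=
  ∑ x, (Matrix.trace (A x))⁻¹ • outerProd (A x) (A x)

/-- The positive semidefinite square root of a positive semidefinite matrix (the definition of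
`Matrix.PosSemidef.sqrt` in the older Mathlib, since removed). -/
noncomputable def psdSqrt {ι : Type*} [Fintype ι] [DecidableEq ι] {A : Matrix ι ι ℂ}
    (hA : A.PosSemidef) : Matrix ι ι ℂ :=
  (hA.1.eigenvectorUnitary : Matrix ι ι ℂ) *
    diagonal ((↑) ∘ (Real.sqrt ·) ∘ hA.1.eigenvalues) *
    (star hA.1.eigenvectorUnitary : Matrix ι ι ℂ)

/-- The generalized Fisher information map of a measurement, relative to a
positive definite state `ρ` (with positive semidefinite square root `ρ^{1/2}`). -/
noncomputable def FisherRho {ι κ : Type*} [Fintype ι] [DecidableEq ι] [Fintype κ]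
    {ρ : Matrix ι ι ℂ} (hρ : ρ.PosDef) (A : κ → Matrix ι ι ℂ) :
    Matrix (ι × ι) (ι × ι) ℂ :=
  ∑ x, (Matrix.trace (ρ * A x))⁻¹ •
    outerProd (psdSqrt hρ.posSemidef * A x) (psdSqrt hρ.posSemidef * A x)

/-- The height of a finite family of self-adjoint matrices: the infimum of the traces of
Hermitian matrices dominating every member in the Loewner order. -/
noncomputable def height {ι κ : Type*} [Fintype ι] [Fintype κ]
    (X : κ → Matrix ι ι ℂ) : ℝ :=
  sInf { t : ℝ | ∃ H : Matrix ι ι ℂ, H.IsHermitian ∧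
    (∀ i, (H - X i).PosSemidef) ∧ t = (Matrix.trace H).re }

/-!
Every `A⁽ⁱ⁾` is a post-processing of `B`, and the Fisher information map is monotone under
post-processing because the perspective `(L, t) ↦ ‖L‖² / t` is jointly convex. Hence
`F_ρ(A⁽ⁱ⁾) ≤ F_ρ(B)` for all `i`, so `F_ρ(B)` competes in the infimum defining the height. Its
trace is `∑_y tr(ρ B_y²) / tr(ρ B_y) ≤ m`, since `0 ≤ B_y ≤ 1` forces `B_y² ≤ B_y`.
-/

section PsdSqrt

variable {ι : Type*} [Fintype ι] [DecidableEq ι] {A : Matrix ι ι ℂ}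

lemma isHermitian_psdSqrt (hA : A.PosSemidef) : (psdSqrt hA).IsHermitian := by
  unfold psdSqrt
  rw [star_eq_conjTranspose]
  refine isHermitian_mul_mul_conjTranspose _ (isHermitian_diagonal_of_self_adjoint _ ?_)
  ext i
  simp

lemma psdSqrt_mul_self (hA : A.PosSemidef) : psdSqrt hA * psdSqrt hA = A := by
  set U : Matrix ι ι ℂ := (hA.1.eigenvectorUnitary : Matrix ι ι ℂ)
  have hU : star U * U = 1 := Unitary.coe_star_mul_self _
  have hD : diagonal (((↑) : ℝ → ℂ) ∘ (Real.sqrt ·) ∘ hA.1.eigenvalues) *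
      diagonal (((↑) : ℝ → ℂ) ∘ (Real.sqrt ·) ∘ hA.1.eigenvalues)
      = diagonal (((↑) : ℝ → ℂ) ∘ hA.1.eigenvalues) := by
    rw [diagonal_mul_diagonal]
    congr 1
    ext i
    simp only [Function.comp_apply, ← Complex.ofReal_mul,
      Real.mul_self_sqrt (hA.eigenvalues_nonneg i)]
  conv_rhs => rw [hA.1.spectral_theorem, Unitary.conjStarAlgAut_apply]
  unfold psdSqrt
  simp only [Matrix.mul_assoc]
  rw [← Matrix.mul_assoc (star U) U, hU, Matrix.one_mul, ← Matrix.mul_assoc _ _ (star U), hD]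
  rfl

end PsdSqrt

section TraceMul

variable {ι : Type*} [Fintype ι] [DecidableEq ι] {ρ M : Matrix ι ι ℂ}

lemma trace_mul_eq_trace_psdSqrt_mul_mul (hρ : ρ.PosSemidef) (M : Matrix ι ι ℂ) :
    (ρ * M).trace = (psdSqrt hρ * M * psdSqrt hρ).trace := by
  calc (ρ * M).trace = (psdSqrt hρ * psdSqrt hρ * M).trace := by rw [psdSqrt_mul_self]
    _ = _ := by rw [Matrix.mul_assoc, trace_mul_comm]

lemma trace_mul_nonneg (hρ : ρ.PosSemidef) (hM : M.PosSemidef) : 0 ≤ (ρ * M).trace := by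
  rw [trace_mul_eq_trace_psdSqrt_mul_mul hρ]
  conv => enter [2, 1, 2]; rw [← (isHermitian_psdSqrt hρ).eq]
  exact (hM.mul_mul_conjTranspose_same _).trace_nonneg

lemma trace_mul_eq_ofReal_re (hρ : ρ.PosSemidef) (hM : M.PosSemidef) :
    (ρ * M).trace = ((ρ * M).trace.re : ℂ) :=
  Complex.eq_re_of_ofReal_le (r := 0) (by rw [Complex.ofReal_zero]; exact trace_mul_nonneg hρ hM)

/-- With `M = Cᴴ C`, `tr (ρ M) = tr ((C ρ^{1/2}) (C ρ^{1/2})ᴴ)` vanishes only if `C ρ^{1/2} = 0`. -/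
lemma psdSqrt_mul_eq_zero_of_trace_mul_eq_zero (hρ : ρ.PosSemidef) (hM : M.PosSemidef)
    (h : (ρ * M).trace = 0) : psdSqrt hρ * M = 0 := by
  set s := psdSqrt hρ
  set C := psdSqrt hM
  have hsH : sᴴ = s := isHermitian_psdSqrt hρ
  have hCH : Cᴴ = C := isHermitian_psdSqrt hM
  have hCs : C * s = 0 := by
    rw [← trace_mul_conjTranspose_self_eq_zero_iff, ← h]
    calc (C * s * (C * s)ᴴ).trace = (C * (s * s) * C).trace := by
          rw [conjTranspose_mul, hsH, hCH]; simp only [Matrix.mul_assoc]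
      _ = (s * s * (C * C)).trace := by rw [Matrix.mul_assoc, trace_mul_comm, Matrix.mul_assoc]
      _ = (ρ * M).trace := by rw [psdSqrt_mul_self, psdSqrt_mul_self]
  calc s * M = (C * s)ᴴ * C := by
        rw [conjTranspose_mul, hsH, hCH, Matrix.mul_assoc, psdSqrt_mul_self]
    _ = 0 := by rw [hCs, conjTranspose_zero, Matrix.zero_mul]

lemma star_vec_dotProduct_vec_psdSqrt_mul (hρ : ρ.PosSemidef) (hM : M.IsHermitian) :
    star (vec (psdSqrt hρ * M)ᵀ) ⬝ᵥ vec (psdSqrt hρ * M)ᵀ = (ρ * (M * M)).trace := by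
  rw [star_vec_dotProduct_vec, conjTranspose_transpose_eq_transpose_conjTranspose,
    ← transpose_mul, trace_transpose, conjTranspose_mul, (isHermitian_psdSqrt hρ).eq, hM.eq,
    trace_mul_eq_trace_psdSqrt_mul_mul hρ]
  simp only [Matrix.mul_assoc]

end TraceMul

/-- Joint convexity of the perspective `(L, t) ↦ ‖L‖² / t`; `hL` makes the junk value `0 / 0 = 0`
the right one at `t = 0`. -/
lemma sq_norm_sum_smul_div_sum_le {κ E : Type*} [SeminormedAddCommGroup E] [NormedSpace ℝ E]
    (s : Finset κ) {μ t : κ → ℝ} {L : κ → E} (hμ : ∀ y, 0 ≤ μ y) (ht : ∀ y, 0 ≤ t y)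
    (hL : ∀ y, t y = 0 → L y = 0) :
    ‖∑ y ∈ s, μ y • L y‖ ^ 2 / ∑ y ∈ s, μ y * t y ≤ ∑ y ∈ s, μ y * (‖L y‖ ^ 2 / t y) := by
  have hterm : ∀ y, 0 ≤ μ y * (‖L y‖ ^ 2 / t y) := fun y =>
    mul_nonneg (hμ y) (div_nonneg (sq_nonneg _) (ht y))
  refine div_le_of_le_mul₀ (Finset.sum_nonneg fun y _ => mul_nonneg (hμ y) (ht y))
    (Finset.sum_nonneg fun y _ => hterm y) ?_
  have hnorm : ‖∑ y ∈ s, μ y • L y‖ ≤ ∑ y ∈ s, μ y * ‖L y‖ :=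
    (norm_sum_le _ _).trans_eq <| Finset.sum_congr rfl fun y _ => by
      rw [norm_smul, Real.norm_of_nonneg (hμ y)]
  calc ‖∑ y ∈ s, μ y • L y‖ ^ 2 ≤ (∑ y ∈ s, μ y * ‖L y‖) ^ 2 := by gcongr
    _ ≤ _ := Finset.sum_sq_le_sum_mul_sum_of_sq_le_mul s (fun y _ => hterm y)
        (fun y _ => mul_nonneg (hμ y) (ht y)) fun y _ => by
      rcases (ht y).eq_or_lt with h0 | hpos
      · simp [hL y h0.symm]
      · exact le_of_eq (by field_simp)

section WeightedOuterSum

variable {n κ : Type*} [Fintype n] [Fintype κ]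

def weightedOuterSum (t : κ → ℝ) (a : κ → n → ℂ) : Matrix n n ℂ :=
  ∑ x, ((t x : ℂ))⁻¹ • vecMulVec (a x) (star (a x))

lemma isHermitian_weightedOuterSum (t : κ → ℝ) (a : κ → n → ℂ) :
    (weightedOuterSum t a).IsHermitian :=
  isSelfAdjoint_sum _ fun x _ =>
    (posSemidef_vecMulVec_self_star (a x)).isHermitian.smul (by simp [IsSelfAdjoint])

lemma star_dotProduct_vecMulVec_mulVec (a v : n → ℂ) :
    star v ⬝ᵥ (vecMulVec a (star a) *ᵥ v) = (‖star a ⬝ᵥ v‖ ^ 2 : ℝ) := by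
  rw [vecMulVec_mulVec, op_smul_eq_smul, dotProduct_smul, smul_eq_mul,
    star_dotProduct v a, Complex.ofReal_pow, ← Complex.mul_conj']
  rfl

lemma star_dotProduct_weightedOuterSum_mulVec (t : κ → ℝ) (a : κ → n → ℂ) (v : n → ℂ) :
    star v ⬝ᵥ (weightedOuterSum t a *ᵥ v) = ((∑ x, ‖star (a x) ⬝ᵥ v‖ ^ 2 / t x : ℝ) : ℂ) := by
  simp only [weightedOuterSum, sum_mulVec, dotProduct_sum, smul_mulVec, dotProduct_smul,
    star_dotProduct_vecMulVec_mulVec]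
  push_cast
  simp [div_eq_inv_mul]

lemma trace_weightedOuterSum (t : κ → ℝ) (a : κ → n → ℂ) :
    (weightedOuterSum t a).trace = ∑ x, ((t x : ℂ))⁻¹ * (star (a x) ⬝ᵥ a x) := by
  simp only [weightedOuterSum, trace_sum, trace_smul, trace_vecMulVec, smul_eq_mul, dotProduct_comm]

lemma posSemidef_weightedOuterSum_sub {κ' : Type*} [Fintype κ'] {t : κ' → ℝ} {a : κ' → n → ℂ}
    {μ : κ → κ' → ℝ} (hμ : ∀ x y, 0 ≤ μ x y) (hμ1 : ∀ y, ∑ x, μ x y = 1) (ht : ∀ y, 0 ≤ t y)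
    (ha : ∀ y, t y = 0 → a y = 0) :
    (weightedOuterSum t a - weightedOuterSum (fun x => ∑ y, μ x y * t y)
      (fun x => ∑ y, (μ x y : ℂ) • a y)).PosSemidef := by
  refine .of_dotProduct_mulVec_nonneg
    ((isHermitian_weightedOuterSum _ _).sub (isHermitian_weightedOuterSum _ _)) fun v => ?_
  rw [sub_mulVec, dotProduct_sub, star_dotProduct_weightedOuterSum_mulVec,
    star_dotProduct_weightedOuterSum_mulVec, sub_nonneg, Complex.real_le_real]
  have hpair : ∀ x, star (∑ y, (μ x y : ℂ) • a y) ⬝ᵥ v = ∑ y, μ x y • (star (a y) ⬝ᵥ v) := by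
    intro x
    simp [star_sum, sum_dotProduct, Complex.real_smul]
  calc ∑ x, ‖star (∑ y, (μ x y : ℂ) • a y) ⬝ᵥ v‖ ^ 2 / ∑ y, μ x y * t y
      ≤ ∑ x, ∑ y, μ x y * (‖star (a y) ⬝ᵥ v‖ ^ 2 / t y) :=
        Finset.sum_le_sum fun x _ => (hpair x).symm ▸
          sq_norm_sum_smul_div_sum_le _ (hμ x) ht fun y hy => by simp [ha y hy]
    _ = ∑ y, ‖star (a y) ⬝ᵥ v‖ ^ 2 / t y := by
        rw [Finset.sum_comm]
        simp only [← Finset.sum_mul, hμ1, one_mul]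

end WeightedOuterSum

lemma IsMeasurement.posSemidef_sub_mul_self {ι κ : Type*} [Fintype ι] [DecidableEq ι] [Fintype κ]
    {B : κ → Matrix ι ι ℂ} (hB : IsMeasurement B) (y : κ) : (B y - B y * B y).PosSemidef := by
  classical
  have hcompl : (1 - B y).PosSemidef := by
    rw [← hB.2, ← Finset.sum_erase_add _ _ (Finset.mem_univ y), add_sub_cancel_right]
    exact posSemidef_sum _ fun x _ => hB.1 x
  obtain ⟨q, hqH, hq⟩ : ∃ q : Matrix ι ι ℂ, qᴴ = q ∧ q * q = B y :=
    ⟨_, isHermitian_psdSqrt (hB.1 y), psdSqrt_mul_self (hB.1 y)⟩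
  have key : q * (1 - B y) * qᴴ = B y - B y * B y := by
    rw [hqH, Matrix.mul_sub, Matrix.mul_one, Matrix.sub_mul, ← hq]
    simp only [Matrix.mul_assoc]
  exact key ▸ hcompl.mul_mul_conjTranspose_same q

/-- `ht` is needed because `sInf` of a set unbounded below is `0` (e.g. for an empty family). -/
lemma height_le {ι κ : Type*} [Fintype ι] [Fintype κ] {X : κ → Matrix ι ι ℂ}
    {H : Matrix ι ι ℂ} {t : ℝ} (hH : H.IsHermitian) (hX : ∀ i, (H - X i).PosSemidef)
    (hHt : H.trace.re ≤ t) (ht : 0 ≤ t) : height X ≤ t := by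
  unfold height
  by_cases hbdd : BddBelow { t : ℝ | ∃ H : Matrix ι ι ℂ, H.IsHermitian ∧
      (∀ i, (H - X i).PosSemidef) ∧ t = (Matrix.trace H).re }
  · exact (csInf_le hbdd ⟨H, hH, hX, rfl⟩).trans hHt
  · rwa [Real.sInf_of_not_bddBelow hbdd]

lemma outerProd_eq_vecMulVec {ι : Type*} (E F : Matrix ι ι ℂ) :
    outerProd E F = vecMulVec (vec Eᵀ) (star (vec Fᵀ)) :=
  rfl

section FisherRho

variable {ι κ : Type*} [Fintype ι] [DecidableEq ι] [Fintype κ] {ρ : Matrix ι ι ℂ}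

lemma fisherRho_eq_weightedOuterSum (hρ : ρ.PosDef) {A : κ → Matrix ι ι ℂ} {t : κ → ℝ}
    (ht : ∀ x, (ρ * A x).trace = t x) :
    FisherRho hρ A = weightedOuterSum t fun x => vec (psdSqrt hρ.posSemidef * A x)ᵀ := by
  simp only [FisherRho, weightedOuterSum, ht, outerProd_eq_vecMulVec]

lemma fisherRho_eq_weightedOuterSum_re (hρ : ρ.PosDef) {B : κ → Matrix ι ι ℂ}
    (hB : ∀ y, (B y).PosSemidef) :
    FisherRho hρ B = weightedOuterSum (fun y => (ρ * B y).trace.re)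
      fun y => vec (psdSqrt hρ.posSemidef * B y)ᵀ :=
  fisherRho_eq_weightedOuterSum hρ fun y => trace_mul_eq_ofReal_re hρ.posSemidef (hB y)

lemma isHermitian_fisherRho (hρ : ρ.PosDef) {B : κ → Matrix ι ι ℂ}
    (hB : ∀ y, (B y).PosSemidef) : (FisherRho hρ B).IsHermitian := by
  rw [fisherRho_eq_weightedOuterSum_re hρ hB]
  exact isHermitian_weightedOuterSum _ _

lemma posSemidef_fisherRho_sub_of_postProc (hρ : ρ.PosDef) {n m : ℕ}
    {A : Fin n → Matrix ι ι ℂ} {B : Fin m → Matrix ι ι ℂ} (hB : ∀ y, (B y).PosSemidef)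
    (hAB : PostProc A B) : (FisherRho hρ B - FisherRho hρ A).PosSemidef := by
  obtain ⟨μ, hμ, hμ1, hA⟩ := hAB
  set s := psdSqrt hρ.posSemidef
  set t : Fin m → ℝ := fun y => (ρ * B y).trace.re
  have htB : ∀ y, (ρ * B y).trace = t y := fun y => trace_mul_eq_ofReal_re hρ.posSemidef (hB y)
  have htA : ∀ x, (ρ * A x).trace = ((∑ y, μ x y * t y : ℝ) : ℂ) := by
    intro x
    simp [hA x, Matrix.mul_sum, trace_sum, htB]
  have hvecA : (fun x => vec (s * A x)ᵀ) = fun x => ∑ y, (μ x y : ℂ) • vec (s * B y)ᵀ := by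
    funext x
    simp [hA x, Matrix.mul_sum, transpose_sum, vec_sum]
  rw [fisherRho_eq_weightedOuterSum hρ htB, fisherRho_eq_weightedOuterSum hρ htA, hvecA]
  refine posSemidef_weightedOuterSum_sub hμ hμ1
    (fun y => Complex.zero_le_real.mp (htB y ▸ trace_mul_nonneg hρ.posSemidef (hB y)))
    fun y hy => ?_
  rw [psdSqrt_mul_eq_zero_of_trace_mul_eq_zero hρ.posSemidef (hB y)
    (by rw [htB, hy, Complex.ofReal_zero])]
  rfl

/-- Each summand `tr (ρ B²) / tr (ρ B)` of the trace is at most `1` because `B² ≤ B`. -/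
lemma re_trace_fisherRho_le_card (hρ : ρ.PosDef) {B : κ → Matrix ι ι ℂ}
    (hB : IsMeasurement B) : (FisherRho hρ B).trace.re ≤ Fintype.card κ := by
  rw [fisherRho_eq_weightedOuterSum_re hρ hB.1, trace_weightedOuterSum, Complex.re_sum]
  calc _ ≤ ∑ _y : κ, (1 : ℝ) := Finset.sum_le_sum fun y _ => ?_
    _ = Fintype.card κ := by simp
  rw [star_vec_dotProduct_vec_psdSqrt_mul hρ.posSemidef (hB.1 y).isHermitian,
    ← Complex.ofReal_inv, Complex.re_ofReal_mul]
  have hsq := trace_mul_nonneg hρ.posSemidef (hB.posSemidef_sub_mul_self y)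
  rw [Matrix.mul_sub, trace_sub, sub_nonneg] at hsq
  exact inv_mul_le_one_of_le₀ (Complex.le_def.mp hsq).1
    (by simpa using (Complex.le_def.mp (trace_mul_nonneg hρ.posSemidef (hB.1 y))).1)

end FisherRho

theorem stmt19_general {d g m : ℕ} (n : Fin g → ℕ)
    (A : (i : Fin g) → Fin (n i) → Matrix (Fin d) (Fin d) ℂ)
    {ρ : Matrix (Fin d) (Fin d) ℂ} (hρ : ρ.PosDef)
    (B : Fin m → Matrix (Fin d) (Fin d) ℂ) (hB : IsMeasurement B)
    (hjoint : ∀ i, PostProc (A i) B) :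
    height (fun i => FisherRho hρ (A i)) ≤ (m : ℝ) :=
  height_le (isHermitian_fisherRho hρ hB.1)
    (fun i => posSemidef_fisherRho_sub_of_postProc hρ hB.1 (hjoint i))
    (by simpa using re_trace_fisherRho_le_card hρ hB) m.cast_nonneg

/-- A lower bound on the number of outcomes of any joint measurement. -/
theorem stmt19 {d g m : ℕ} (n : Fin g → ℕ)
    (A : (i : Fin g) → Fin (n i) → Matrix (Fin d) (Fin d) ℂ)
    (hA : ∀ i, IsMeasurement (A i)) (hA0 : ∀ i x, A i x ≠ 0)
    {ρ : Matrix (Fin d) (Fin d) ℂ} (hρ : ρ.PosDef) (hρtr : Matrix.trace ρ = 1)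
    (B : Fin m → Matrix (Fin d) (Fin d) ℂ) (hB : IsMeasurement B)
    (hjoint : ∀ i, PostProc (A i) B) :
    height (fun i => FisherRho hρ (A i)) ≤ (m : ℝ) :=
  stmt19_general n A hρ B hB hjoint
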